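/- Let R be a subring of a commutative ring K that is local with maximal ideal m, and let x ∈ K be a unit of K. If there exist finitely many elements c₁,…,c_N ∈ m such that 1 = Σ_{i=1}^{N} c_i x^{-i}, then x is integral over R. -/
import Mathlib


/-- Let `R` be a local subring of a commutative ring `K` with maximal ideal `m`,
and let `x ∈ K` be a unit of `K` with inverse `xi`.  If `1 = Σ_{i=1}^{N} cᵢ x^{-i}`
with the `cᵢ ∈ m`, then `x` is integral over `R`. -/
theorem stmt8 {K : Type*} [CommRing K] (R : Subring K)
    (m : Ideal R) (hmmax : m.IsMaximal)
    (hlocal : ∀ I : Ideal R, I.IsMaximal → I = m)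
    (x xi : K) (hxi : x * xi = 1)
    (N : ℕ) (c : ℕ → R) (hc : ∀ i ∈ Finset.Icc 1 N, c i ∈ m)
    (hrel : (1 : K) = ∑ i ∈ Finset.Icc 1 N, (c i : K) * xi ^ i) :
    IsIntegral R x := by
  rcases Nat.eq_zero_or_pos N with h0 | hN
  · subst h0
    simp only [Finset.Icc_self, Finset.Icc_eq_empty_of_lt (by norm_num : (1:ℕ) > 0),
      Finset.sum_empty] at hrel
    have : Subsingleton K := subsingleton_of_zero_eq_one hrel.symm
    exact ⟨Polynomial.X, Polynomial.monic_X, Subsingleton.elim _ _⟩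
  · -- Key: x^N * xi^i = x^(N-i) for i ≤ N
    have key : ∀ i ∈ Finset.Icc 1 N, x ^ N * xi ^ i = x ^ (N - i) := by
      intro i hi
      obtain ⟨_, hi2⟩ := Finset.mem_Icc.mp hi
      calc x ^ N * xi ^ i = x ^ (N - i) * (x * xi) ^ i := by
            rw [mul_pow, ← mul_assoc, ← pow_add, Nat.sub_add_cancel hi2]
        _ = x ^ (N - i) := by rw [hxi, one_pow, mul_one]
    have hx : x ^ N = ∑ i ∈ Finset.Icc 1 N, (c i : K) * x ^ (N - i) := by
      calc x ^ N = x ^ N * 1 := (mul_one _).symm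
        _ = ∑ i ∈ Finset.Icc 1 N, (c i : K) * (x ^ N * xi ^ i) := by
            rw [hrel, Finset.mul_sum]; congr 1; ext i; ring
        _ = ∑ i ∈ Finset.Icc 1 N, (c i : K) * x ^ (N - i) := by
            exact Finset.sum_congr rfl fun i hi => by rw [key i hi]
    refine ⟨Polynomial.X ^ N - ∑ i ∈ Finset.Icc 1 N,
      Polynomial.C (c i) * Polynomial.X ^ (N - i), ?_, ?_⟩
    · apply Polynomial.monic_X_pow_sub
      refine lt_of_le_of_lt (Polynomial.degree_sum_le _ _) ?_
      rw [Finset.sup_lt_iff (by exact_mod_cast WithBot.bot_lt_coe N)]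
      intro i hi
      obtain ⟨hi1, hi2⟩ := Finset.mem_Icc.mp hi
      refine lt_of_le_of_lt (Polynomial.degree_C_mul_X_pow_le _ _) ?_
      exact_mod_cast (by omega : N - i < N)
    · simp only [Polynomial.eval₂_sub, Polynomial.eval₂_X_pow, Polynomial.eval₂_finset_sum,
        Polynomial.eval₂_mul, Polynomial.eval₂_C, Polynomial.eval₂_X_pow]
      rw [hx, sub_eq_zero]
      rfl
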